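/- Let P be a poset with least element 0 which is Z-directed, and let Z be a lower complete sublattice of P which is P-central, P-modular and Z-modular. Then an element p ∈ P is ≾_Z-finite (i.e. q ≤ p together with p ≾_Z q implies p = q) if and only if for every q ≤ p there exists z ∈ Z such that q is the infimum in P of p and z (i.e. the interval [0,p] equals {p∧z : z ∈ Z}). -/

import Mathlib

/-- `S` is `Z`-disjoint: there is `f : S → Z` with `p ≤ f p` and `f p ∧ f q = 0`
for distinct `p, q ∈ S`. -/
def ZDisjoint {β : Type*} [PartialOrder β] [OrderBot β] (Z S : Set β) : Prop :=
  ∃ f : β → β, (∀ p ∈ S, f p ∈ Z ∧ p ≤ f p) ∧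
    ∀ p ∈ S, ∀ q ∈ S, p ≠ q → Disjoint (f p) (f q)

/-- `I` is `Z`-complete: every `Z`-disjoint `S ⊆ I` has a supremum lying in `I`, and
whenever `{p, q}` is `Z`-disjoint with supremum in `I`, both `p` and `q` lie in `I`. -/
def ZComplete {β : Type*} [PartialOrder β] [OrderBot β] (Z I : Set β) : Prop :=
  (∀ S ⊆ I, ZDisjoint Z S → ∃ s, IsLUB S s ∧ s ∈ I) ∧
  (∀ p q s, ZDisjoint Z {p, q} → IsLUB {p, q} s → s ∈ I → p ∈ I ∧ q ∈ I)

/-- `Z` is `S`-central: for every `p ∈ S` and `y ∈ Z` there is `z ∈ Z` with `y ∧ z = 0`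
and `p` the supremum of some `q ≤ y` and `r ≤ z`. -/
def SCentral {β : Type*} [PartialOrder β] [OrderBot β] (Z S : Set β) : Prop :=
  ∀ p ∈ S, ∀ y ∈ Z, ∃ z ∈ Z, Disjoint y z ∧ ∃ q r, q ≤ y ∧ r ≤ z ∧ IsLUB {q, r} p
/-- `Z` is `P`-modular: disjoint pairs in `Z` are modular pairs. -/
def PModular {β : Type*} [PartialOrder β] [OrderBot β] (Z : Set β) : Prop :=
  ∀ y ∈ Z, ∀ z ∈ Z, Disjoint y z →
    ∀ p q s, p ≤ y → q ≤ z → IsLUB {p, q} s → IsGLB {z, s} q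
/-- `Z` is `Z`-modular: whenever `y, z ∈ Z` with `y ∧ z = 0`, `p, q ∈ Z` with `p ≤ y`,
`q ≤ z` and `p, q` have a least upper bound `s` within the subposet `Z`, then `q` is the
greatest lower bound within `Z` of `z` and `s`. -/
def ZModular {β : Type*} [PartialOrder β] [OrderBot β] (Z : Set β) : Prop :=
  ∀ y ∈ Z, ∀ z ∈ Z, Disjoint y z → ∀ p ∈ Z, ∀ q ∈ Z, p ≤ y → q ≤ z →
    ∀ s ∈ Z, (p ≤ s ∧ q ≤ s ∧ ∀ w ∈ Z, p ≤ w → q ≤ w → s ≤ w) →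
      (q ≤ s ∧ ∀ w ∈ Z, w ≤ z → w ≤ s → w ≤ q)

/-! For `q ≤ p` let `y` be the least element of `Z` above `q`. Centrality splits `p` as
`q₁ ∨ r` with `q₁ ≤ y` and `r` below some `z ∈ Z` disjoint from `y`; then `{q, r}` is
`Z`-disjoint, so `s = q ∨ r ≤ p` exists, and `P`-modularity gives `q = y ∧ s`. Every element
of `Z` above `s` lies above `y` and `r`, hence above `p`; so `p ≾_Z s`, and finiteness forces
`s = p`, i.e. `q = p ∧ y`. Conversely, if `q = p ∧ z` and `p ≾_Z q`, then `p ≤ z`, so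
`p ≤ q`. -/

section

variable {α : Type*} [Preorder α]

lemma mem_upperBounds_pair {a b x : α} : x ∈ upperBounds {a, b} ↔ a ≤ x ∧ b ≤ x := by
  simp [upperBounds_insert]

lemma mem_lowerBounds_pair {a b x : α} : x ∈ lowerBounds {a, b} ↔ x ≤ a ∧ x ≤ b := by
  simp [lowerBounds_insert]

end

section

variable {α : Type*} [PartialOrder α] [OrderBot α] {Z : Set α}

lemma zDisjoint_pair {y z p q : α} (hy : y ∈ Z) (hz : z ∈ Z) (hyz : Disjoint y z)
    (hp : p ≤ y) (hq : q ≤ z) : ZDisjoint Z {p, q} := by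
  classical
  refine ⟨fun x => if x = p then y else z, ?_, ?_⟩
  · rintro x (rfl | rfl)
    · simp [hy, hp]
    · by_cases h : x = p
      · subst h; simp [hy, hp]
      · simp [h, hz, hq]
  · rintro a (rfl | rfl) b (rfl | rfl) hab
    · exact absurd rfl hab
    · simpa [Ne.symm hab] using hyz
    · simpa [hab] using hyz.symm
    · exact absurd rfl hab

lemma exists_le_isGLB_pair_of_central
    (hdir : ∀ p q : α, ZDisjoint Z {p, q} → ∃ s, IsLUB {p, q} s)
    {S : Set α} (hcen : SCentral Z S) (hpm : PModular Z) {p q y : α} (hpS : p ∈ S)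
    (hy : y ∈ Z) (hqy : q ≤ y) (hqp : q ≤ p) :
    ∃ s, s ≤ p ∧ IsGLB {y, s} q ∧ ∀ w ∈ Z, y ≤ w → s ≤ w → p ≤ w := by
  obtain ⟨z, hz, hyz, q₁, r, hq₁y, hrz, hp⟩ := hcen p hpS y hy
  have hrp : r ≤ p := (mem_upperBounds_pair.1 hp.1).2
  obtain ⟨s, hs⟩ := hdir q r (zDisjoint_pair hy hz hyz hqy hrz)
  have hrs : r ≤ s := (mem_upperBounds_pair.1 hs.1).2
  refine ⟨s, hs.2 (mem_upperBounds_pair.2 ⟨hqp, hrp⟩), ?_, fun w _ hyw hsw => ?_⟩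
  · rw [Set.pair_comm] at hs
    exact hpm z hz y hy hyz.symm r q s hrz hqy hs
  · exact hp.2 (mem_upperBounds_pair.2 ⟨hq₁y.trans hyw, hrs.trans hsw⟩)

end

theorem stmt15_general {α : Type*} [PartialOrder α] [OrderBot α] (Z : Set α)
    (hdir : ∀ p q : α, ZDisjoint Z {p, q} → ∃ s, IsLUB {p, q} s)
    (hZl : ∀ S ⊆ Z, ∃ i, IsGLB S i ∧ i ∈ Z)
    (hcen : SCentral Z Set.univ) (hpm : PModular Z)
    (p : α) :
    (∀ q, q ≤ p → (∀ z ∈ Z, q ≤ z → p ≤ z) → p = q) ↔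
    (∀ q, q ≤ p → ∃ z ∈ Z, IsGLB {p, z} q) := by
  constructor
  · intro hfin q hqp
    obtain ⟨y, hyglb, hy⟩ := hZl {z | z ∈ Z ∧ q ≤ z} fun z hz => hz.1
    have hqy : q ≤ y := hyglb.2 fun z hz => hz.2
    obtain ⟨s, hsp, hglb, hps⟩ :=
      exists_le_isGLB_pair_of_central hdir hcen hpm trivial hy hqy hqp
    have hqs : q ≤ s := (mem_lowerBounds_pair.1 hglb.1).2
    have hpeq : p = s :=
      hfin s hsp fun w hw hsw => hps w hw (hyglb.1 ⟨hw, hqs.trans hsw⟩) hsw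
    refine ⟨y, hy, ?_⟩
    rwa [Set.pair_comm, ← hpeq] at hglb
  · intro h q hqp hprec
    obtain ⟨z, hz, hglb⟩ := h q hqp
    have hpz : p ≤ z := hprec z hz (mem_lowerBounds_pair.1 hglb.1).2
    exact le_antisymm (hglb.2 (mem_lowerBounds_pair.2 ⟨le_rfl, hpz⟩)) hqp

/-- Let `P` be `Z`-directed (`Z`-disjoint pairs have suprema) and `Z` a `P`-central,
`P`-modular, `Z`-modular lower complete sublattice of `P`.  Then `p` is `≾_Z`-finite
(meaning `q ≤ p` and `p ≾_Z q` imply `p = q`, where `p ≾_Z q` iff every `z ∈ Z` above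
`q` is above `p`) if and only if every `q ≤ p` is the infimum in `P` of `p` and some
`z ∈ Z`, i.e. `[0, p] = {p ∧ z : z ∈ Z}`. -/
theorem stmt15 {α : Type*} [PartialOrder α] [OrderBot α] (Z : Set α)
    (hdir : ∀ p q : α, ZDisjoint Z {p, q} → ∃ s, IsLUB {p, q} s)
    (hZl : ∀ S ⊆ Z, ∃ i, IsGLB S i ∧ i ∈ Z)
    (hcen : SCentral Z Set.univ) (hpm : PModular Z) (hzm : ZModular Z)
    (p : α) :
    (∀ q, q ≤ p → (∀ z ∈ Z, q ≤ z → p ≤ z) → p = q) ↔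
    (∀ q, q ≤ p → ∃ z ∈ Z, IsGLB {p, z} q) :=
  stmt15_general Z hdir hZl hcen hpm p
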